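/- arXiv:1903.04908 — 6 statements merged into one kernel-verified Lean document; each statement's English description precedes it below -/
import Mathlib

section
/- Let A ⊂ ℝⁿ be an admissible locally BV set, let F and G be charges in A, and let f be a function defined on cl_*A. If F is an indefinite R integral of f in A with respect to G, then F is also an indefinite packing R integral of f in A with respect to G. -/
open MeasureTheory Metric Set Filter
open scoped ENNReal NNReal

noncomputable section

abbrev En (n : ℕ) : Type := EuclideanSpace ℝ (Fin n)

variable {n : ℕ}

/-- The essential interior of `A`: points of Lebesgue density 1. -/
def essInterior (A : Set (En n)) : Set (En n) :=
  {x | Tendsto (fun r : ℝ => volume (A ∩ ball x r) / volume (ball x r))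
      (nhdsWithin 0 (Ioi 0)) (nhds 1)}

/-- The essential closure of `A`: points of positive upper Lebesgue density. -/
def essClosure (A : Set (En n)) : Set (En n) :=
  {x | 0 < Filter.limsup (fun r : ℝ => volume (A ∩ ball x r) / volume (ball x r))
      (nhdsWithin 0 (Ioi 0))}

/-- The essential boundary of `A`. -/
def essBoundary (A : Set (En n)) : Set (En n) := essClosure A \ essInterior A

/-- Perimeter: the `(n-1)`-dimensional Hausdorff measure of the essential boundary. -/
def perim (E : Set (En n)) : ℝ≥0∞ := μH[(n : ℝ) - 1] (essBoundary E)

/-- A bounded BV set. -/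
def IsBVSet (E : Set (En n)) : Prop :=
  MeasurableSet E ∧ Bornology.IsBounded E ∧ volume E < ⊤ ∧ perim E < ⊤

/-- A locally BV set. -/
def IsLocBVSet (A : Set (En n)) : Prop :=
  MeasurableSet A ∧ ∀ U : Set (En n), IsOpen U → Bornology.IsBounded U →
    μH[(n : ℝ) - 1] (essBoundary A ∩ U) < ⊤

/-- An admissible set: `int_* A ⊆ A ⊆ cl_* A`. -/
def IsAdmissible (A : Set (En n)) : Prop :=
  essInterior A ⊆ A ∧ A ⊆ essClosure A

/-- A charge. -/
def IsCharge (F : Set (En n) → ℝ) : Prop :=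
  (∀ A B : Set (En n), IsBVSet A → IsBVSet B → Disjoint A B → F (A ∪ B) = F A + F B) ∧
  ∀ ε : ℝ, 0 < ε → ∃ η : ℝ, 0 < η ∧ ∀ C : Set (En n), IsBVSet C →
    C ⊆ ball 0 (1 / ε) → perim C < ENNReal.ofReal (1 / ε) →
    volume C < ENNReal.ofReal η → |F C| < ε

/-- Regularity of the pair `(E, x)`. -/
def regPair (E : Set (En n)) (x : En n) : ℝ :=
  if volume E = 0 then 0
  else (volume E).toReal / (Metric.diam (E ∪ {x}) * (perim E).toReal)

/-- Regularity of the set `E`. -/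
def regSet (E : Set (En n)) : ℝ :=
  if volume E = 0 then 0
  else (volume E).toReal / (Metric.diam E * (perim E).toReal)

/-- Relative perimeter of `T` in `E`. -/
def relPerim (T E : Set (En n)) : ℝ≥0∞ :=
  μH[(n : ℝ) - 1] (essBoundary T ∩ essInterior E)

/-- `E` is `ε`-isoperimetric. -/
def IsIsoperimetric (ε : ℝ) (E : Set (En n)) : Prop :=
  ∀ T : Set (En n), IsBVSet T →
    min (perim (E ∩ T)) (perim (E \ T)) ≤ ENNReal.ofReal (1 / ε) * relPerim T E

/-- The seminorm `q̄^ε_{x,r}`. -/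
def qSem (ε : ℝ) (x : En n) (r : ℝ) (F : Set (En n) → ℝ) : ℝ≥0∞ :=
  ⨆ (E : Set (En n)) (_ : IsBVSet E ∧ IsCompact (closure E) ∧ closure E ⊆ ball x r ∧
      x ∈ essClosure E ∧ ε < regPair E x ∧ IsIsoperimetric ε E),
    ENNReal.ofReal |F E|

/-- The seminorm `p̄^ε_{x,r}`. -/
def pSem (ε : ℝ) (x : En n) (r : ℝ) (F : Set (En n) → ℝ) : ℝ≥0∞ :=
  ⨆ (E : Set (En n)) (_ : IsBVSet E ∧ IsCompact (closure E) ∧ closure E ⊆ ball x r ∧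
      ε < regPair E x),
    ENNReal.ofReal |F E|

/-- A set of σ-finite `H^{n-1}` measure. -/
def SigmaFiniteHnm1 (N : Set (En n)) : Prop :=
  ∃ f : ℕ → Set (En n), N ⊆ ⋃ i, f i ∧ ∀ i, μH[(n : ℝ) - 1] (f i) < ⊤

/-- A gage on `S`. -/
def IsGage (S : Set (En n)) (δ : En n → ℝ) : Prop :=
  (∀ x ∈ S, 0 ≤ δ x) ∧ SigmaFiniteHnm1 {x | x ∈ S ∧ δ x = 0}

/-- A packing: finitely many pairwise disjoint open balls. -/
def IsPacking {k : ℕ} (x : Fin k → En n) (r : Fin k → ℝ) : Prop :=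
  (∀ i, 0 < r i) ∧ ∀ i j : Fin k, i ≠ j → Disjoint (ball (x i) (r i)) (ball (x j) (r j))

/-- A `δ`-fine packing with tags in `S`. -/
def IsFinePacking {k : ℕ} (S : Set (En n)) (δ : En n → ℝ) (x : Fin k → En n)
    (r : Fin k → ℝ) : Prop :=
  ∀ i, x i ∈ S ∧ 2 * r i < δ (x i)

/-- `F` is an indefinite packing R* integral of `f` w.r.t. `G`, with tags in `S`
and witnessing constant `τ`. -/
def PackingRStarWith (S : Set (En n)) (τ : ℝ) (F : Set (En n) → ℝ) (f : En n → ℝ)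
    (G : Set (En n) → ℝ) : Prop :=
  ∀ ε : ℝ, 0 < ε → ∃ δ : En n → ℝ, IsGage S δ ∧
    ∀ (k : ℕ) (x : Fin k → En n) (r : Fin k → ℝ), IsPacking x r →
      IsFinePacking S δ x r →
      ∑ i, qSem ε (x i) (τ * r i) (fun E => F E - f (x i) * G E) < ENNReal.ofReal ε

/-- `F` is an indefinite packing R* integral of `f` w.r.t. `G`, with tags in `S`. -/
def PackingRStar (S : Set (En n)) (F : Set (En n) → ℝ) (f : En n → ℝ)
    (G : Set (En n) → ℝ) : Prop :=
  ∃ τ : ℝ, τ ∈ Ioc (0 : ℝ) 1 ∧ PackingRStarWith S τ F f G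

/-- `F` is an indefinite packing R integral of `f` w.r.t. `G`, with tags in `S`. -/
def PackingR (S : Set (En n)) (F : Set (En n) → ℝ) (f : En n → ℝ)
    (G : Set (En n) → ℝ) : Prop :=
  ∃ τ : ℝ, τ ∈ Ioc (0 : ℝ) 1 ∧
    ∀ ε : ℝ, 0 < ε → ∃ δ : En n → ℝ, IsGage S δ ∧
      ∀ (k : ℕ) (x : Fin k → En n) (r : Fin k → ℝ), IsPacking x r →
        IsFinePacking S δ x r →
        ∑ i, pSem ε (x i) (τ * r i) (fun E => F E - f (x i) * G E) < ENNReal.ofReal ε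


/-- A BV partition: finitely many pairwise disjoint bounded BV sets with tags. -/
def IsBVPartition {n : ℕ} {k : ℕ} (E : Fin k → Set (En n)) : Prop :=
  (∀ i, IsBVSet (E i)) ∧ ∀ i j : Fin k, i ≠ j → Disjoint (E i) (E j)

/-- `F` is an indefinite R integral of `f` in `A` with respect to `G`. -/
def RIntegralOn {n : ℕ} (A : Set (En n)) (F : Set (En n) → ℝ) (f : En n → ℝ)
    (G : Set (En n) → ℝ) : Prop :=
  ∀ ε : ℝ, 0 < ε → ∃ δ : En n → ℝ, IsGage (essClosure A) δ ∧
    ∀ (k : ℕ) (E : Fin k → Set (En n)) (x : Fin k → En n),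
      IsBVPartition E → (∀ i, ε < regPair (E i) (x i)) →
      (∀ i, x i ∈ essClosure A ∧ Metric.diam (E i ∪ {x i}) < δ (x i)) →
      ∑ i, |F (E i) - f (x i) * G (E i)| < ε

/-- `F` is an intrinsic indefinite R integral of `f` in `A` with respect to `G`:
only partitions with `⋃ᵢ Aᵢ ⊆ A` are tested. -/
def IntrinsicRIntegralOn {n : ℕ} (A : Set (En n)) (F : Set (En n) → ℝ) (f : En n → ℝ)
    (G : Set (En n) → ℝ) : Prop :=
  ∀ ε : ℝ, 0 < ε → ∃ δ : En n → ℝ, IsGage (essClosure A) δ ∧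
    ∀ (k : ℕ) (E : Fin k → Set (En n)) (x : Fin k → En n),
      IsBVPartition E → (⋃ i, E i) ⊆ A → (∀ i, ε < regPair (E i) (x i)) →
      (∀ i, x i ∈ essClosure A ∧ Metric.diam (E i ∪ {x i}) < δ (x i)) →
      ∑ i, |F (E i) - f (x i) * G (E i)| < ε

/-!
Take `τ = 1` and, for `ε > 0`, the gage `δ` that the R integral provides for `ε / 2`. Given a
`δ`-fine packing, choose in each ball `B(xᵢ, rᵢ)` an `ε`-regular set `Eᵢ` competing in the
supremum `p̄^ε_{xᵢ, rᵢ}`. The balls are disjoint and have diameter `2 rᵢ < δ(xᵢ)`, so the `Eᵢ`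
form a `δ`-fine `ε/2`-regular BV partition tagged in `cl_* A`, whose Riemann error is below
`ε / 2`. Since the sum of the suprema is the supremum of the sums over such choices, the packing
sum is at most `ε / 2 < ε`.
-/

theorem ENNReal.finsetSum_iSup_le {α κ : Type*} {s : Finset α} {f : α → κ → ℝ≥0∞} {a : ℝ≥0∞}
    (h : ∀ g : α → κ, ∑ i ∈ s, f i (g i) ≤ a) : ∑ i ∈ s, ⨆ j, f i j ≤ a := by
  classical
  have hsup : ∀ i, ⨆ j, f i j = ⨆ g : α → κ, f i (g i) := fun i =>
    le_antisymm (iSup_le fun j => le_iSup_of_le (fun _ => j) le_rfl)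
      (iSup_le fun g => le_iSup _ (g i))
  simp_rw [hsup]
  -- choice functions are directed: pick the better of the two choices at each index
  rw [ENNReal.finsetSum_iSup fun g₁ g₂ =>
    ⟨fun i => if f i (g₁ i) ≤ f i (g₂ i) then g₂ i else g₁ i, fun i => by
      dsimp only
      split_ifs with hi
      · exact ⟨hi, le_rfl⟩
      · exact ⟨le_rfl, (not_le.mp hi).le⟩⟩]
  exact iSup_le h

theorem RIntegralOn.exists_gage_finsetSum_lt {A : Set (En n)} {F G : Set (En n) → ℝ}
    {f : En n → ℝ} (h : RIntegralOn A F f G) {ε : ℝ} (hε : 0 < ε) :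
    ∃ δ : En n → ℝ, IsGage (essClosure A) δ ∧
      ∀ {ι : Type*} (s : Finset ι) (E : ι → Set (En n)) (x : ι → En n),
        (∀ i ∈ s, IsBVSet (E i)) → (s : Set ι).PairwiseDisjoint E →
        (∀ i ∈ s, ε < regPair (E i) (x i)) →
        (∀ i ∈ s, x i ∈ essClosure A ∧ Metric.diam (E i ∪ {x i}) < δ (x i)) →
        ∑ i ∈ s, |F (E i) - f (x i) * G (E i)| < ε := by
  obtain ⟨δ, hδ, hsum⟩ := h ε hε
  refine ⟨δ, hδ, fun s E x hE hdisj hreg htag => ?_⟩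
  let e := s.equivFin.symm
  have hpart : IsBVPartition (fun j => E (e j)) :=
    ⟨fun j => hE _ (e j).2, fun j j' hjj' =>
      hdisj (e j).2 (e j').2 fun heq => hjj' (e.injective (Subtype.ext heq))⟩
  rw [← Finset.sum_coe_sort, ← e.sum_comp]
  exact hsum _ _ _ hpart (fun j => hreg _ (e j).2) fun j => htag _ (e j).2

theorem union_singleton_subset_ball_of_closure_subset {X : Type*} [PseudoMetricSpace X]
    {E : Set X} {x : X} {r : ℝ}
    (hr : 0 < r) (hE : closure E ⊆ ball x r) : E ∪ {x} ⊆ ball x r :=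
  union_subset (subset_closure.trans hE) (singleton_subset_iff.mpr (mem_ball_self hr))

theorem sum_pSem_le_of_forall_finsetSum_le {k : ℕ} {x : Fin k → En n} {r : Fin k → ℝ}
    (hpack : IsPacking x r) {ε c : ℝ} {Φ : Fin k → Set (En n) → ℝ}
    (hΦ : ∀ (s : Finset (Fin k)) (E : Fin k → Set (En n)),
      (∀ i ∈ s, IsBVSet (E i) ∧ E i ∪ {x i} ⊆ ball (x i) (r i) ∧ ε < regPair (E i) (x i)) →
      (s : Set (Fin k)).PairwiseDisjoint E → ∑ i ∈ s, |Φ i (E i)| ≤ c) :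
    ∑ i, pSem ε (x i) (r i) (Φ i) ≤ ENNReal.ofReal c := by
  classical
  refine ENNReal.finsetSum_iSup_le fun E => ?_
  let good : Fin k → Prop := fun i =>
    IsBVSet (E i) ∧ IsCompact (closure (E i)) ∧ closure (E i) ⊆ ball (x i) (r i) ∧
      ε < regPair (E i) (x i)
  have hsub : ∀ i, good i → E i ∪ {x i} ⊆ ball (x i) (r i) := fun i hi =>
    union_singleton_subset_ball_of_closure_subset (hpack.1 i) hi.2.2.1
  simp only [iSup_eq_if, bot_eq_zero, ← Finset.sum_filter]
  rw [← ENNReal.ofReal_sum_of_nonneg fun i _ => abs_nonneg _]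
  refine ENNReal.ofReal_le_ofReal (hΦ _ E (fun i hi => ?_) fun i hi j hj hij => ?_)
  · have hi : good i := (Finset.mem_filter.mp hi).2
    exact ⟨hi.1, hsub i hi, hi.2.2.2⟩
  · have hi : good i := (Finset.mem_filter.mp hi).2
    have hj : good j := (Finset.mem_filter.mp hj).2
    exact (hpack.2 i j hij).mono (subset_union_left.trans (hsub i hi))
      (subset_union_left.trans (hsub j hj))

theorem packingR_of_rIntegral_general {n : ℕ}
    (A : Set (En n)) (F G : Set (En n) → ℝ)
    (f : En n → ℝ) (h : RIntegralOn A F f G) :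
    PackingR (essClosure A) F f G := by
  refine ⟨1, ⟨one_pos, le_rfl⟩, fun ε hε => ?_⟩
  obtain ⟨δ, hδ, hsum⟩ := h.exists_gage_finsetSum_lt (half_pos hε)
  refine ⟨δ, hδ, fun k x r hpack hfine => ?_⟩
  have hbound : ∑ i, pSem ε (x i) (1 * r i) (fun E => F E - f (x i) * G E) ≤
      ENNReal.ofReal (ε / 2) := by
    simp only [one_mul]
    refine sum_pSem_le_of_forall_finsetSum_le hpack fun s E hE hdisj =>
      (hsum s E x (fun i hi => (hE i hi).1) hdisj ?_ fun i hi => ⟨(hfine i).1, ?_⟩).le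
    · exact fun i hi => (half_lt_self hε).trans (hE i hi).2.2
    · calc Metric.diam (E i ∪ {x i}) ≤ Metric.diam (ball (x i) (r i)) :=
            diam_mono (hE i hi).2.1 isBounded_ball
        _ ≤ 2 * r i := diam_ball (hpack.1 i).le
        _ < δ (x i) := (hfine i).2
  exact hbound.trans_lt ((ENNReal.ofReal_lt_ofReal_iff hε).mpr (half_lt_self hε))

/-- If `F` is an indefinite R integral of `f` in the admissible locally BV set `A`
with respect to `G`, then `F` is also an indefinite packing R integral of `f` in `A`
with respect to `G`. -/
theorem packingR_of_rIntegral {n : ℕ} (hn : 1 ≤ n)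
    (A : Set (En n)) (hA : IsLocBVSet A) (hAad : IsAdmissible A)
    (F G : Set (En n) → ℝ) (hF : IsCharge F) (hG : IsCharge G)
    (hFA : ∀ E : Set (En n), IsBVSet E → F E = F (E ∩ A))
    (hGA : ∀ E : Set (En n), IsBVSet E → G E = G (E ∩ A))
    (f : En n → ℝ) (h : RIntegralOn A F f G) :
    PackingR (essClosure A) F f G :=
  packingR_of_rIntegral_general A F G f h
end
end

section
/- Let A ⊂ ℝⁿ be a locally BV set and let the charge F be an indefinite R* integral of a function f: cl_*A → ℝ in A with respect to a charge G. Then F is also an indefinite packing R* integral of f in A with respect to G. -/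
/-!
Take `τ = 1`. In a `δ`-fine packing, every set admissible for `q̄^ε_{xᵢ, rᵢ}` lies in the ball
`B(xᵢ, rᵢ)`, whose diameter is below `δ(xᵢ)`, and these balls are disjoint. So any choice of one
admissible set for each of some of the balls is a strongly `ε/2`-regular `δ`-fine BV partition,
where `δ` is the gage of the R* integral at level `ε/2`, and its Riemann sum is below `ε/2`.
Taking suprema over all such choices bounds the sum of the seminorms by `ε/2 < ε`.
-/

open MeasureTheory Metric Set Filter
open scoped ENNReal NNReal

noncomputable section

variable {n : ℕ}

/-- `F` is an indefinite R* integral of `f` in `A` with respect to `G`: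
sums over strongly `ε`-regular `δ`-fine BV partitions are small. -/
def RStarIntegralOn {n : ℕ} (A : Set (En n)) (F : Set (En n) → ℝ) (f : En n → ℝ)
    (G : Set (En n) → ℝ) : Prop :=
  ∀ ε : ℝ, 0 < ε → ∃ δ : En n → ℝ, IsGage (essClosure A) δ ∧
    ∀ (k : ℕ) (E : Fin k → Set (En n)) (x : Fin k → En n),
      IsBVPartition E →
      (∀ i, ε < regPair (E i) (x i) ∧ IsIsoperimetric ε (E i) ∧ x i ∈ essClosure (E i)) →
      (∀ i, x i ∈ essClosure A ∧ Metric.diam (E i ∪ {x i}) < δ (x i)) →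
      ∑ i, |F (E i) - f (x i) * G (E i)| < ε

open Classical in
theorem ENNReal.finsetSum_biSup_le {ι α : Type*} (s : Finset ι) (P : ι → α → Prop)
    (g : ι → α → ℝ≥0∞) {B : ℝ≥0∞}
    (h : ∀ e : ι → α, ∑ i ∈ s with P i (e i), g i (e i) ≤ B) :
    ∑ i ∈ s, ⨆ (a) (_ : P i a), g i a ≤ B := by
  set g' : ι → α → ℝ≥0∞ := fun i a => if P i a then g i a else 0
  have hsup (i : ι) : ⨆ (a) (_ : P i a), g i a = ⨆ e : ι → α, g' i (e i) := by
    rw [Function.Surjective.iSup_comp (f := fun e : ι → α => e i) (fun a => ⟨fun _ => a, rfl⟩)]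
    simp only [g', iSup_eq_if, bot_eq_zero]
  have hdir (e₁ e₂ : ι → α) :
      ∃ e : ι → α, ∀ i, g' i (e₁ i) ≤ g' i (e i) ∧ g' i (e₂ i) ≤ g' i (e i) :=
    ⟨fun i => if g' i (e₁ i) ≤ g' i (e₂ i) then e₂ i else e₁ i, fun i => by
      dsimp only
      split_ifs with hle
      · exact ⟨hle, le_rfl⟩
      · exact ⟨le_rfl, (not_le.mp hle).le⟩⟩
  calc ∑ i ∈ s, ⨆ (a) (_ : P i a), g i a = ∑ i ∈ s, ⨆ e : ι → α, g' i (e i) := by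
        simp only [hsup]
    _ = ⨆ e : ι → α, ∑ i ∈ s, g' i (e i) := ENNReal.finsetSum_iSup hdir
    _ ≤ B := iSup_le fun e => by simpa only [g', Finset.sum_filter] using h e

theorem IsIsoperimetric.mono {ε ε' : ℝ} {E : Set (En n)} (hE : IsIsoperimetric ε E)
    (hε' : 0 < ε') (hle : ε' ≤ ε) : IsIsoperimetric ε' E := fun T hT =>
  (hE T hT).trans (by gcongr)

theorem Metric.diam_union_singleton_le_of_subset_ball {X : Type*} [PseudoMetricSpace X]
    {E : Set X} {x : X} {r : ℝ} (hr : 0 ≤ r) (hE : E ⊆ ball x r) :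
    diam (E ∪ {x}) ≤ 2 * r :=
  (diam_mono (union_subset (hE.trans ball_subset_closedBall)
    (singleton_subset_iff.mpr (mem_closedBall_self hr))) isBounded_closedBall).trans
    (diam_closedBall hr)

def IsStronglyRegular (ε : ℝ) (E : Set (En n)) (x : En n) : Prop :=
  ε < regPair E x ∧ IsIsoperimetric ε E ∧ x ∈ essClosure E

theorem IsStronglyRegular.mono {ε ε' : ℝ} {E : Set (En n)} {x : En n}
    (hE : IsStronglyRegular ε E x) (hε' : 0 < ε') (hle : ε' ≤ ε) :
    IsStronglyRegular ε' E x :=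
  ⟨hle.trans_lt hE.1, hE.2.1.mono hε' hle, hE.2.2⟩

def IsRStarGage (A : Set (En n)) (F : Set (En n) → ℝ) (f : En n → ℝ) (G : Set (En n) → ℝ)
    (ε : ℝ) (δ : En n → ℝ) : Prop :=
  ∀ (k : ℕ) (E : Fin k → Set (En n)) (x : Fin k → En n),
    IsBVPartition E → (∀ i, IsStronglyRegular ε (E i) (x i)) →
    (∀ i, x i ∈ essClosure A ∧ diam (E i ∪ {x i}) < δ (x i)) →
    ∑ i, |F (E i) - f (x i) * G (E i)| < ε

theorem IsRStarGage.finsetSum_lt {A : Set (En n)} {F G : Set (En n) → ℝ} {f : En n → ℝ}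
    {ε : ℝ} {δ : En n → ℝ} (hδ : IsRStarGage A F f G ε δ) {ι : Type*} (s : Finset ι)
    (E : ι → Set (En n)) (x : ι → En n) (hdisj : (s : Set ι).PairwiseDisjoint E)
    (hBV : ∀ i ∈ s, IsBVSet (E i)) (hreg : ∀ i ∈ s, IsStronglyRegular ε (E i) (x i))
    (hfine : ∀ i ∈ s, x i ∈ essClosure A ∧ diam (E i ∪ {x i}) < δ (x i)) :
    ∑ i ∈ s, |F (E i) - f (x i) * G (E i)| < ε := by
  set e := s.equivFin.symm
  have hsum := hδ _ (fun j => E (e j)) (fun j => x (e j))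
    ⟨fun j => hBV _ (e j).2, fun j₁ j₂ hj => hdisj (e j₁).2 (e j₂).2
      (fun h => hj (e.injective (Subtype.ext h)))⟩
    (fun j => hreg _ (e j).2) (fun j => hfine _ (e j).2)
  rwa [e.sum_comp (fun i => |F (E i) - f (x i) * G (E i)|),
    Finset.sum_coe_sort s (fun i => |F (E i) - f (x i) * G (E i)|)] at hsum

theorem IsRStarGage.sum_qSem_le {A : Set (En n)} {F G : Set (En n) → ℝ} {f : En n → ℝ}
    {ε ε' : ℝ} {δ : En n → ℝ} (hδ : IsRStarGage A F f G ε' δ) (hε' : 0 < ε') (hle : ε' ≤ ε)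
    {k : ℕ} {x : Fin k → En n} {r : Fin k → ℝ} (hpack : IsPacking x r)
    (hfine : IsFinePacking (essClosure A) δ x r) :
    ∑ i, qSem ε (x i) (r i) (fun E => F E - f (x i) * G E) ≤ ENNReal.ofReal ε' := by
  refine ENNReal.finsetSum_biSup_le _ _ _ fun E => ?_
  rw [← ENNReal.ofReal_sum_of_nonneg fun _ _ => abs_nonneg _]
  refine ENNReal.ofReal_le_ofReal (hδ.finsetSum_lt _ E x ?_ ?_ ?_ ?_).le <;>
    simp only [Finset.coe_filter, Finset.mem_filter, Finset.mem_univ, true_and]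
  · rintro i ⟨-, -, hi, -⟩ j ⟨-, -, hj, -⟩ hij
    exact (hpack.2 i j hij).mono (subset_closure.trans hi) (subset_closure.trans hj)
  · exact fun i hi => hi.1
  · exact fun i ⟨_, _, _, hxE, hreg, hiso⟩ => IsStronglyRegular.mono ⟨hreg, hiso, hxE⟩ hε' hle
  · exact fun i ⟨_, _, hi, _⟩ => ⟨(hfine i).1,
      (diam_union_singleton_le_of_subset_ball (hpack.1 i).le
        (subset_closure.trans hi)).trans_lt (hfine i).2⟩

theorem packingRStar_of_rStar_general {n : ℕ} (A : Set (En n)) (F G : Set (En n) → ℝ) (f : En n → ℝ)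
    (h : RStarIntegralOn A F f G) :
    PackingRStar (essClosure A) F f G := by
  refine ⟨1, ⟨one_pos, le_rfl⟩, fun ε hε => ?_⟩
  obtain ⟨δ, hgage, hδ⟩ := h (ε / 2) (half_pos hε)
  refine ⟨δ, hgage, fun k x r hpack hfine => ?_⟩
  simp only [one_mul]
  calc ∑ i, qSem ε (x i) (r i) (fun E => F E - f (x i) * G E) ≤ ENNReal.ofReal (ε / 2) :=
        IsRStarGage.sum_qSem_le hδ (half_pos hε) (half_le_self hε.le) hpack hfine
    _ < ENNReal.ofReal ε := (ENNReal.ofReal_lt_ofReal_iff hε).mpr (half_lt_self hε)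

/-- If the charge `F` is an indefinite R* integral of `f` in the locally BV set `A`
with respect to the charge `G`, then `F` is also an indefinite packing R* integral of
`f` in `A` with respect to `G`. -/
theorem packingRStar_of_rStar {n : ℕ} (hn : 1 ≤ n)
    (A : Set (En n)) (hA : IsLocBVSet A)
    (F G : Set (En n) → ℝ) (hF : IsCharge F) (hG : IsCharge G)
    (hFA : ∀ E : Set (En n), IsBVSet E → F E = F (E ∩ A))
    (f : En n → ℝ) (h : RStarIntegralOn A F f G) :
    PackingRStar (essClosure A) F f G :=
  packingRStar_of_rStar_general A F G f h

end
end

section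
/- Let α > 0 and let f, F, G: ℝ → ℝ be functions with G continuous. If F is an indefinite MC_α integral of f with respect to G, then F is continuous. -/
open Filter Set

/-- `F` is an indefinite `MC_α` integral of `f` with respect to `G`: there is a strictly
increasing control function `φ` such that for every `x`,
`(F(x+h) − F(x) − f(x)(G(x+h) − G(x))) / (φ(x+αh) − φ(x)) → 0` as `h → 0`. -/
def IsMCIntegral (α : ℝ) (F f G : ℝ → ℝ) : Prop :=
  ∃ φ : ℝ → ℝ, StrictMono φ ∧ ∀ x : ℝ,
    Tendsto
      (fun h : ℝ => (F (x + h) - F x - f x * (G (x + h) - G x)) / (φ (x + α * h) - φ x))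
      (nhdsWithin 0 {(0 : ℝ)}ᶜ) (nhds 0)

/-- If `F` is an indefinite `MC_α` integral of `f` with respect to a continuous `G`,
then `F` is continuous. -/
theorem continuous_of_mcIntegral (α : ℝ) (hα : 0 < α) (f F G : ℝ → ℝ)
    (hG : Continuous G) (h : IsMCIntegral α F f G) : Continuous F := by
  obtain ⟨φ, hφ, hI⟩ := h
  rw [continuous_iff_continuousAt]
  intro x
  rw [← continuousWithinAt_compl_self]
  -- map y ↦ y - x from punctured nbhd of x to punctured nbhd of 0
  have hmap : Tendsto (fun y : ℝ => y - x) (nhdsWithin x {x}ᶜ) (nhdsWithin 0 {(0:ℝ)}ᶜ) := by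
    rw [tendsto_nhdsWithin_iff]
    constructor
    · have : Tendsto (fun y : ℝ => y - x) (nhds x) (nhds (x - x)) :=
        (continuous_id.sub continuous_const).tendsto x
      simpa using this.mono_left nhdsWithin_le_nhds
    · filter_upwards [self_mem_nhdsWithin] with y hy
      simpa [sub_ne_zero] using hy
  have hq : Tendsto (fun y : ℝ =>
      (F (x + (y - x)) - F x - f x * (G (x + (y - x)) - G x)) /
        (φ (x + α * (y - x)) - φ x)) (nhdsWithin x {x}ᶜ) (nhds 0) := (hI x).comp hmap
  simp only [add_sub_cancel] at hq
  set C : ℝ := max (φ (x + α) - φ x) (φ x - φ (x - α)) with hCdef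
  have hC : 0 ≤ C := le_max_of_le_left (sub_nonneg.2 (hφ (by linarith)).le)
  have hsmall : ∀ᶠ y in nhdsWithin x {x}ᶜ, |y - x| ≤ 1 := by
    have : ∀ᶠ y in nhds x, |y - x| ≤ 1 := by
      have := Metric.closedBall_mem_nhds x one_pos
      filter_upwards [this] with y hy
      simpa [Real.dist_eq] using hy
    exact this.filter_mono nhdsWithin_le_nhds
  have hbound : ∀ᶠ y in nhdsWithin x {x}ᶜ, |φ (x + α * (y - x)) - φ x| ≤ C := by
    filter_upwards [hsmall] with y hy
    have h1 : x + α * (y - x) ≤ x + α := by nlinarith [abs_le.1 hy]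
    have h2 : x - α ≤ x + α * (y - x) := by nlinarith [abs_le.1 hy]
    rw [abs_le]
    constructor
    · have := hφ.monotone h2
      have : φ x - φ (x - α) ≤ C := le_max_right _ _
      nlinarith [hφ.monotone h2]
    · have := hφ.monotone h1
      have hl : φ (x + α) - φ x ≤ C := le_max_left _ _
      linarith
  have hnum : Tendsto (fun y : ℝ => F y - F x - f x * (G y - G x))
      (nhdsWithin x {x}ᶜ) (nhds 0) := by
    apply squeeze_zero_norm'
      (a := fun y : ℝ => |(F y - F x - f x * (G y - G x)) / (φ (x + α * (y - x)) - φ x)| * C)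
    · filter_upwards [hbound, self_mem_nhdsWithin] with y hb hy
      have hyx : y ≠ x := hy
      have hd : φ (x + α * (y - x)) - φ x ≠ 0 := by
        rcases lt_trichotomy y x with hlt | heq | hgt
        · have : x + α * (y - x) < x := by nlinarith
          exact ne_of_lt (sub_neg.2 (by simpa using hφ this))
        · exact absurd heq hyx
        · have : x < x + α * (y - x) := by nlinarith
          exact ne_of_gt (sub_pos.2 (by simpa using hφ this))
      rw [Real.norm_eq_abs]
      calc |F y - F x - f x * (G y - G x)|
          = |(F y - F x - f x * (G y - G x)) / (φ (x + α * (y - x)) - φ x)| *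
              |φ (x + α * (y - x)) - φ x| := by
            rw [← abs_mul, div_mul_cancel₀ _ hd]
        _ ≤ |(F y - F x - f x * (G y - G x)) / (φ (x + α * (y - x)) - φ x)| * C :=
            mul_le_mul_of_nonneg_left hb (abs_nonneg _)
    · have := (hq.abs.mul_const C)
      simpa using this
  have hGx : Tendsto (fun y : ℝ => f x * (G y - G x)) (nhdsWithin x {x}ᶜ) (nhds 0) := by
    have : Tendsto (fun y : ℝ => f x * (G y - G x)) (nhds x) (nhds (f x * (G x - G x))) :=
      (continuous_const.mul (hG.sub continuous_const)).tendsto x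
    simpa using this.mono_left nhdsWithin_le_nhds
  have : Tendsto (fun y : ℝ => F y - F x) (nhdsWithin x {x}ᶜ) (nhds 0) := by
    have := hnum.add hGx
    simpa using this
  have : Tendsto F (nhdsWithin x {x}ᶜ) (nhds (F x)) := by
    have h2 := this.add (tendsto_const_nhds (x := F x))
    simpa using h2
  exact this
end

section
/- Let 0 < α < β be real numbers and let f, F, G: ℝ → ℝ be functions with G continuous. If F is an indefinite MC_α integral of f with respect to G, then F is also an indefinite MC_β integral of f with respect to G. -/
open Filter Set

/-- If `0 < α < β` and `F` is an indefinite `MC_α` integral of `f` with respect to a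
continuous `G`, then `F` is an indefinite `MC_β` integral of `f` with respect to `G`. -/
theorem mcIntegral_mono (α β : ℝ) (hα : 0 < α) (hαβ : α < β) (f F G : ℝ → ℝ)
    (hG : Continuous G) (h : IsMCIntegral α F f G) : IsMCIntegral β F f G := by
  obtain ⟨φ, hφ, hx⟩ := h
  refine ⟨φ, hφ, fun x => ?_⟩
  have hβ : 0 < β := hα.trans hαβ
  refine squeeze_zero_norm' (a := fun h : ℝ =>
      ‖(F (x + h) - F x - f x * (G (x + h) - G x)) / (φ (x + α * h) - φ x)‖) ?_ ?_
  · filter_upwards [self_mem_nhdsWithin] with t ht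
    have ht0 : t ≠ 0 := ht
    set N := F (x + t) - F x - f x * (G (x + t) - G x)
    have key : |φ (x + α * t) - φ x| ≤ |φ (x + β * t) - φ x| := by
      rcases lt_or_gt_of_ne ht0 with hneg | hpos
      · have h1 : φ (x + β * t) ≤ φ (x + α * t) := by
          apply hφ.monotone; nlinarith
        have h2 : φ (x + α * t) ≤ φ x := by
          apply hφ.monotone; nlinarith
        rw [abs_of_nonpos (by linarith), abs_of_nonpos (by linarith)]
        linarith
      · have h1 : φ (x + α * t) ≤ φ (x + β * t) := by
          apply hφ.monotone; nlinarith
        have h2 : φ x ≤ φ (x + α * t) := by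
          apply hφ.monotone; nlinarith
        rw [abs_of_nonneg (by linarith), abs_of_nonneg (by linarith)]
        linarith
    have hαne : |φ (x + α * t) - φ x| > 0 := by
      rw [gt_iff_lt, abs_pos, sub_ne_zero]
      intro heq
      have := hφ.injective heq
      have : α * t = 0 := by linarith
      exact ht0 ((mul_eq_zero.1 this).resolve_left hα.ne')
    simp only [Real.norm_eq_abs, abs_div]
    exact div_le_div_of_nonneg_left (abs_nonneg N) hαne key
  · simpa only [Real.norm_eq_abs, abs_zero] using (hx x).abs
end

section
/- Let n ∈ ℕ, 0 < ε ≤ 1/(2n), and let Q = [0,a_1] × [0,a_2] × ⋯ × [0,a_n] with all a_i > 0 be an ε-regular interval. Then max{a_1,…,a_n} ≤ (1/ε) · min{a_1,…,a_n}. -/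
open MeasureTheory Metric Set Filter
open scoped ENNReal NNReal

noncomputable section

variable {n : ℕ}

/-!
The volume of `Q` is `∏ aₗ`, its diameter is at least `aᵢ`, and its perimeter is at least the
area `∏_{l ≠ j} aₗ` of its face `{y_j = a_j}`; hence `ε < regSet Q ≤ a_j / a_i`. The relative
interior of that face lies in the essential boundary: near each of its points `Q` coincides with
a half-space, and a point reflection shows that a half-space has density `1/2` at every point of
its boundary hyperplane.
-/

open Topology

theorem MeasureTheory.Measure.addHaar_levelSet_eq_zero {E : Type*} [NormedAddCommGroup E]
    [NormedSpace ℝ E] [MeasurableSpace E] [BorelSpace E] [FiniteDimensional ℝ E]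
    (μ : Measure E) [μ.IsAddHaarMeasure] {f : E →L[ℝ] ℝ} (hf : f ≠ 0) (c : ℝ) :
    μ {y | f y = c} = 0 := by
  obtain ⟨x, rfl⟩ | hc := em (c ∈ range f)
  · refine measure_mono_null (fun y hy => ?_) (addHaar_affineSubspace μ
      (AffineSubspace.mk' x (LinearMap.ker (f : E →ₗ[ℝ] ℝ))) fun h => hf ?_)
    · simp_all [AffineSubspace.mem_mk']
    · have := congrArg AffineSubspace.direction h
      simp only [AffineSubspace.direction_mk', AffineSubspace.direction_top,
        LinearMap.ker_eq_top] at this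
      exact ContinuousLinearMap.coe_injective this
  · rw [show {y | f y = c} = ∅ from eq_empty_of_forall_notMem fun y hy => hc ⟨y, hy⟩,
      measure_empty]

theorem MeasureTheory.Measure.two_mul_addHaar_halfspace_inter_ball {E : Type*}
    [NormedAddCommGroup E] [NormedSpace ℝ E] [MeasurableSpace E] [BorelSpace E]
    [FiniteDimensional ℝ E] (μ : Measure E) [μ.IsAddHaarMeasure] {f : E →L[ℝ] ℝ} (hf : f ≠ 0)
    (x : E) (r : ℝ) :
    2 * μ ({y | f y ≤ f x} ∩ ball x r) = μ (ball x r) := by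
  set L := {y | f y ≤ f x} ∩ ball x r
  set U := {y | f x ≤ f y} ∩ ball x r
  have hL : MeasurableSet L :=
    (measurableSet_le f.measurable measurable_const).inter measurableSet_ball
  have hU : MeasurableSet U :=
    (measurableSet_le measurable_const f.measurable).inter measurableSet_ball
  have hdist (y : E) : dist (x + x - y) x = dist y x := by
    rw [dist_eq_norm, dist_eq_norm, ← norm_neg]
    congr 1
    abel
  have hreflect : (fun y => (x + x) - y) ⁻¹' L = U := by
    ext y
    simp only [L, U, mem_preimage, mem_inter_iff, mem_ofPred_eq, mem_ball, hdist, map_sub,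
      map_add]
    constructor <;> rintro ⟨h1, h2⟩ <;> exact ⟨by linarith, h2⟩
  have hLU : μ U = μ L := by
    rw [← hreflect, (Measure.measurePreserving_sub_left μ (x + x)).measure_preimage
      hL.nullMeasurableSet]
  have hcover : L ∪ U = ball x r := by
    ext y
    simp only [L, U, mem_union, mem_inter_iff, mem_ofPred_eq]
    rcases le_total (f y) (f x) with h | h <;> tauto
  have hnull : μ (L ∩ U) = 0 :=
    measure_mono_null (fun y hy => le_antisymm hy.1.1 hy.2.1)
      (addHaar_levelSet_eq_zero μ hf (f x))
  have hsum := measure_union_add_inter L hU (μ := μ)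
  rw [hcover, hnull, add_zero, hLU] at hsum
  rw [hsum, two_mul]

theorem mem_essBoundary_of_eventually_density_eq {A : Set (En n)} {x : En n} {c : ℝ≥0∞}
    (hc₀ : c ≠ 0) (hc₁ : c ≠ 1)
    (h : ∀ᶠ r in 𝓝[>] 0, volume (A ∩ ball x r) / volume (ball x r) = c) :
    x ∈ essBoundary A := by
  refine ⟨?_, fun hx => hc₁ ?_⟩
  · rw [essClosure, mem_ofPred_eq, limsup_congr h, limsup_const]
    exact pos_iff_ne_zero.mpr hc₀
  · exact tendsto_nhds_unique (tendsto_const_nhds.congr' (h.mono fun _ hr => hr.symm)) hx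

def closedBox (a : Fin n → ℝ) : Set (En n) := {y | ∀ l, y l ∈ Icc 0 (a l)}

theorem closedBox_eq_preimage (a : Fin n → ℝ) : closedBox a = WithLp.ofLp ⁻¹' Icc 0 a := by
  ext y
  simp [closedBox, Pi.le_def, forall_and]

theorem volume_closedBox (a : Fin n → ℝ) :
    volume (closedBox a) = ∏ l, ENNReal.ofReal (a l) := by
  rw [closedBox_eq_preimage, (PiLp.volume_preserving_ofLp _).measure_preimage
    measurableSet_Icc.nullMeasurableSet, Real.volume_Icc_pi]
  simp

theorem le_diam_closedBox {a : Fin n → ℝ} (ha : ∀ l, 0 ≤ a l) (i : Fin n) :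
    a i ≤ diam (closedBox a) := by
  have hbdd : Bornology.IsBounded (closedBox a) := by
    rw [closedBox_eq_preimage]
    exact (PiLp.antilipschitzWith_ofLp 2 _).isBounded_preimage (isBounded_Icc 0 a)
  have hzero : (0 : En n) ∈ closedBox a := fun l => ⟨le_rfl, ha l⟩
  have hsingle : EuclideanSpace.single i (a i) ∈ closedBox a := fun l => by
    by_cases h : l = i
    · subst h; simp [ha l]
    · simp [h, ha l]
  simpa [abs_of_nonneg (ha i)] using dist_le_diam_of_mem hbdd hsingle hzero

theorem mem_essBoundary_closedBox_of_mem_face {a : Fin n → ℝ} {j : Fin n} (hj : 0 < a j)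
    {x : En n} (hxj : x j = a j) (hx : ∀ l, l ≠ j → x l ∈ Ioo 0 (a l)) :
    x ∈ essBoundary (closedBox a) := by
  have hnear : ∀ᶠ y in 𝓝 x, ∀ l, 0 < y l ∧ (l ≠ j → y l < a l) := by
    refine eventually_all.mpr fun l => ?_
    have hcont : ContinuousAt (fun y : En n => y l) x :=
      (EuclideanSpace.proj (𝕜 := ℝ) l).continuous.continuousAt
    by_cases hl : l = j
    · subst hl
      exact (hcont.eventually (lt_mem_nhds (hj.trans_eq hxj.symm))).mono
        fun y hy => ⟨hy, absurd rfl⟩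
    · exact ((hcont.eventually (lt_mem_nhds (hx l hl).1)).and
        (hcont.eventually (gt_mem_nhds (hx l hl).2))).mono fun y hy => ⟨hy.1, fun _ => hy.2⟩
  obtain ⟨ρ, hρ, hball⟩ := eventually_nhds_iff_ball.mp hnear
  set f : En n →L[ℝ] ℝ := EuclideanSpace.proj j
  have hf : f ≠ 0 := fun h => by
    simpa [f] using congrArg (fun g : En n →L[ℝ] ℝ => g (EuclideanSpace.single j 1)) h
  have hlocal : ∀ r ≤ ρ, closedBox a ∩ ball x r = {y | f y ≤ f x} ∩ ball x r := by
    intro r hr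
    ext y
    refine and_congr_left fun hy => ⟨fun h => (h j).2.trans_eq hxj.symm, fun h l => ?_⟩
    obtain ⟨hpos, hlt⟩ := hball y (ball_subset_ball hr hy) l
    by_cases hl : l = j
    · subst hl; exact ⟨hpos.le, h.trans_eq hxj⟩
    · exact ⟨hpos.le, (hlt hl).le⟩
  refine mem_essBoundary_of_eventually_density_eq (c := 2⁻¹) (by simp) (by norm_num) ?_
  filter_upwards [Ioo_mem_nhdsGT hρ] with r hr
  have hhalf := volume.two_mul_addHaar_halfspace_inter_ball hf x r
  have hpos : volume ({y | f y ≤ f x} ∩ ball x r) ≠ 0 := fun h0 => by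
    simp [h0, (measure_ball_pos volume x hr.1).ne] at hhalf
  have hfin : volume ({y | f y ≤ f x} ∩ ball x r) ≠ ⊤ :=
    (measure_mono inter_subset_right).trans_lt measure_ball_lt_top |>.ne
  rw [hlocal r hr.2.le, ← hhalf, ENNReal.div_eq_inv_mul, ENNReal.mul_inv (by simp) (by simp),
    mul_assoc, ENNReal.inv_mul_cancel hpos hfin, mul_one]

theorem prod_volume_le_hausdorffMeasure_slice (j : Fin n) (c : ℝ) (s : Fin n → Set ℝ) :
    ∏ l : {l // l ≠ j}, volume (s l) ≤
      μH[(n : ℝ) - 1] {y : En n | y j = c ∧ ∀ l, l ≠ j → y l ∈ s l} := by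
  set g : En n → ({l // l ≠ j} → ℝ) := fun y l => y l
  have hg : LipschitzWith 1 g := LipschitzWith.mk_one fun y z =>
    (dist_pi_le_iff dist_nonneg).2 fun l => PiLp.dist_apply_le y z l
  have hdim : (n : ℝ) - 1 = Fintype.card {l // l ≠ j} := by
    rw [Fintype.card_subtype_compl, Fintype.card_fin, Fintype.card_unique,
      Nat.cast_sub (Fin.pos j), Nat.cast_one]
  have hsurj : univ.pi (fun l : {l // l ≠ j} => s l) ⊆
      g '' {y : En n | y j = c ∧ ∀ l, l ≠ j → y l ∈ s l} := fun z hz =>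
    ⟨WithLp.toLp 2 fun l => if h : l = j then c else z ⟨l, h⟩,
      ⟨by simp, fun l hl => by simpa [hl] using hz ⟨l, hl⟩ (mem_univ _)⟩,
      funext fun l => by simp [g, l.2]⟩
  calc ∏ l : {l // l ≠ j}, volume (s l)
      = μH[Fintype.card {l // l ≠ j}] (univ.pi fun l : {l // l ≠ j} => s l) := by
        rw [hausdorffMeasure_pi_real, volume_pi_pi]
    _ ≤ μH[(n : ℝ) - 1] (g '' {y : En n | y j = c ∧ ∀ l, l ≠ j → y l ∈ s l}) :=
        hdim ▸ measure_mono hsurj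
    _ ≤ μH[(n : ℝ) - 1] {y : En n | y j = c ∧ ∀ l, l ≠ j → y l ∈ s l} := by
        simpa using hg.hausdorffMeasure_image_le (hdim ▸ Nat.cast_nonneg _) _

theorem ofReal_prod_le_perim_closedBox {a : Fin n → ℝ} (ha : ∀ l, 0 < a l) (j : Fin n) :
    ENNReal.ofReal (∏ l : {l // l ≠ j}, a l) ≤ perim (closedBox a) :=
  calc ENNReal.ofReal (∏ l : {l // l ≠ j}, a l)
      = ∏ l : {l // l ≠ j}, volume (Ioo 0 (a l)) := by
        simp only [Real.volume_Ioo, sub_zero]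
        exact ENNReal.ofReal_prod_of_nonneg fun l _ => (ha l).le
    _ ≤ μH[(n : ℝ) - 1] {y : En n | y j = a j ∧ ∀ l, l ≠ j → y l ∈ Ioo 0 (a l)} :=
        prod_volume_le_hausdorffMeasure_slice j (a j) fun l => Ioo 0 (a l)
    _ ≤ perim (closedBox a) :=
        measure_mono fun _ hx => mem_essBoundary_closedBox_of_mem_face (ha j) hx.1 hx.2

theorem regSet_le {E : Set (En n)} {D P : ℝ} (hD : 0 < D) (hDE : D ≤ diam E) (hP : 0 < P)
    (hPE : ENNReal.ofReal P ≤ perim E) : regSet E ≤ (volume E).toReal / (D * P) := by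
  have hbound : 0 ≤ (volume E).toReal / (D * P) := by positivity
  unfold regSet
  split_ifs
  · exact hbound
  rcases eq_or_ne (perim E) ⊤ with htop | htop
  · simpa [htop] using hbound
  · exact div_le_div_of_nonneg_left ENNReal.toReal_nonneg (mul_pos hD hP)
      (mul_le_mul hDE ((ENNReal.ofReal_le_iff_le_toReal htop).1 hPE) hP.le (hD.le.trans hDE))

theorem regular_interval_sides_general {n : ℕ}
    (ε : ℝ) (hε : 0 < ε)
    (a : Fin n → ℝ) (ha : ∀ i, 0 < a i)
    (Q : Set (En n)) (hQ : Q = {y : En n | ∀ l, y l ∈ Icc 0 (a l)})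
    (hreg : ε < regSet Q) :
    ∀ i j : Fin n, a i ≤ (1 / ε) * a j := by
  intro i j
  obtain rfl : Q = closedBox a := hQ
  set P := ∏ l : {l // l ≠ j}, a l
  have hP : 0 < P := Finset.prod_pos fun l _ => ha l
  have hvol : (volume (closedBox a)).toReal = a j * P := by
    rw [volume_closedBox, ENNReal.toReal_prod, Fintype.prod_eq_mul_prod_subtype_ne _ j]
    simp [P, fun l => (ha l).le]
  have hratio : ε < a j / a i :=
    calc ε < regSet (closedBox a) := hreg
      _ ≤ (volume (closedBox a)).toReal / (a i * P) :=
        regSet_le (ha i) (le_diam_closedBox (fun l => (ha l).le) i) hP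
          (ofReal_prod_le_perim_closedBox ha j)
      _ = a j / a i := by rw [hvol, mul_div_mul_right _ _ hP.ne']
  rw [one_div_mul_eq_div, le_div_iff₀ hε, mul_comm]
  exact ((lt_div_iff₀ (ha i)).1 hratio).le

/-- If `0 < ε ≤ 1/(2n)` and `Q = ∏ [0,aᵢ]` (all `aᵢ > 0`) is an `ε`-regular interval,
then `max aᵢ ≤ (1/ε)·min aᵢ`, i.e. `aᵢ ≤ (1/ε)·aⱼ` for all `i, j`. -/
theorem regular_interval_sides {n : ℕ} (hn : 1 ≤ n)
    (ε : ℝ) (hε : 0 < ε) (hε' : ε ≤ 1 / (2 * n))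
    (a : Fin n → ℝ) (ha : ∀ i, 0 < a i)
    (Q : Set (En n)) (hQ : Q = {y : En n | ∀ l, y l ∈ Icc 0 (a l)})
    (hreg : ε < regSet Q) :
    ∀ i j : Fin n, a i ≤ (1 / ε) * a j :=
  regular_interval_sides_general ε hε a ha Q hQ hreg
end
end

section
/- Let τ ∈ (0,1] and ε > 0. Then there exists a constant c_T depending only on τ and the dimension n with the following property: for each function Φ: ℝ → (0,∞), each x ∈ ℝⁿ and each R > 0 there exists 0 < r < R such that Φ(10r) + ε·|B(x,10r)| ≤ c_T·( Φ(τr) + ε·|B(x,τr)| ), where |B(x,s)| denotes the Lebesgue measure of the open ball of radius s. -/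
open MeasureTheory Metric Set Filter
open scoped ENNReal NNReal

noncomputable section

variable {n : ℕ}

/-- For every `τ ∈ (0,1]` there is a constant `c_T` depending only on `τ` and `n` such
that for every `ε > 0`, every `Φ : ℝ → (0,∞)`, every `x ∈ ℝⁿ` and every `R > 0` there
exists `0 < r < R` with
`Φ(10r) + ε·|B(x,10r)| ≤ c_T·(Φ(τr) + ε·|B(x,τr)|)`. -/
theorem key_radius_lemma {n : ℕ} (hn : 1 ≤ n) (τ : ℝ) (hτ : τ ∈ Ioc (0 : ℝ) 1) :
    ∃ cT : ℝ, ∀ ε : ℝ, 0 < ε → ∀ Φ : ℝ → ℝ, (∀ t, 0 < Φ t) →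
      ∀ (x : En n) (R : ℝ), 0 < R → ∃ r : ℝ, 0 < r ∧ r < R ∧
        Φ (10 * r) + ε * (volume (ball x (10 * r))).toReal ≤
          cT * (Φ (τ * r) + ε * (volume (ball x (τ * r))).toReal) := by
  obtain ⟨hτ0, hτ1⟩ := hτ
  set a : ℝ := τ / 10 with ha
  have ha0 : 0 < a := by positivity
  have ha1 : a < 1 := by rw [ha]; linarith
  have han : (0:ℝ) < a ^ n := pow_pos ha0 n
  set cT : ℝ := (1 + a ^ n) / a ^ n with hcT
  have hcT0 : 0 < cT := by positivity
  have hcTa : cT * a ^ n = 1 + a ^ n := by rw [hcT]; field_simp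
  refine ⟨cT, ?_⟩
  intro ε hε Φ hΦ x R hR
  by_contra hcon
  push_neg at hcon
  haveI : Nonempty (Fin n) := Fin.pos_iff_nonempty.mp hn
  -- abbreviation for the quantity
  set Ψ : ℝ → ℝ := fun s => Φ s + ε * (volume (ball x s)).toReal with hΨ
  have h' : ∀ s : ℝ, 0 < s → s < R → cT * Ψ (τ * s) < Ψ (10 * s) :=
    fun s hs hsR => hcon s hs hsR
  -- the geometric sequence of radii
  set r : ℕ → ℝ := fun k => (R / 2) * a ^ k with hrdef
  have hr0 : ∀ k, 0 < r k := fun k => by positivity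
  have hrR : ∀ k, r k < R := by
    intro k
    have h1 : a ^ k ≤ 1 := pow_le_one₀ ha0.le ha1.le
    have : r k ≤ R / 2 := by
      calc r k = (R / 2) * a ^ k := rfl
        _ ≤ (R / 2) * 1 := by nlinarith
        _ = R / 2 := by ring
    linarith
  have hshift : ∀ k, τ * r k = 10 * r (k + 1) := by
    intro k
    simp only [hrdef, ha, pow_succ]
    ring
  -- main inductive estimate
  have main : ∀ k, cT ^ k * Ψ (10 * r k) ≤ Ψ (10 * r 0) := by
    intro k
    induction k with
    | zero => simp
    | succ k ih =>
      have h1 : cT * Ψ (τ * r k) < Ψ (10 * r k) := h' (r k) (hr0 k) (hrR k)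
      rw [hshift k] at h1
      calc cT ^ (k + 1) * Ψ (10 * r (k + 1))
          = cT ^ k * (cT * Ψ (10 * r (k + 1))) := by ring
        _ ≤ cT ^ k * Ψ (10 * r k) :=
            mul_le_mul_of_nonneg_left h1.le (pow_nonneg hcT0.le k)
        _ ≤ Ψ (10 * r 0) := ih
  -- volume of balls
  set B : ℝ := (volume (ball (0 : En n) 1)).toReal with hB
  have hBpos : 0 < B := by
    rw [hB]
    exact ENNReal.toReal_pos (measure_ball_pos volume 0 one_pos).ne'
      (measure_ball_lt_top).ne
  have hvol : ∀ s : ℝ, 0 ≤ s → (volume (ball x s)).toReal = s ^ n * B := by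
    intro s hs
    rw [Measure.addHaar_ball volume x hs, ENNReal.toReal_mul,
      ENNReal.toReal_ofReal (pow_nonneg hs _), finrank_euclideanSpace_fin]
  -- lower bound on Ψ at scale 10 * r k
  have hlower : ∀ k, ε * ((5 * R) ^ n * B) * (a ^ n) ^ k ≤ Ψ (10 * r k) := by
    intro k
    have hs : (0:ℝ) ≤ 10 * r k := by positivity
    have h1 : (10 * r k) = (5 * R) * a ^ k := by
      simp only [hrdef]; ring
    have h2 : (volume (ball x (10 * r k))).toReal
        = (5 * R) ^ n * (a ^ n) ^ k * B := by
      rw [hvol _ hs, h1, mul_pow, ← pow_mul, ← pow_mul, Nat.mul_comm]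
    have h3 : 0 < Φ (10 * r k) := hΦ _
    simp only [hΨ]
    rw [h2]
    nlinarith [h3]
  -- combine: (1 + a^n)^k * C ≤ Ψ (10 * r 0) for all k
  set C : ℝ := ε * ((5 * R) ^ n * B) with hC
  have hCpos : 0 < C := by positivity
  have hcomb : ∀ k, (1 + a ^ n) ^ k * C ≤ Ψ (10 * r 0) := by
    intro k
    have h1 : cT ^ k * (C * (a ^ n) ^ k) ≤ cT ^ k * Ψ (10 * r k) :=
      mul_le_mul_of_nonneg_left (by simpa [mul_comm, mul_assoc] using hlower k)
        (pow_nonneg hcT0.le k)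
    have h2 : cT ^ k * (C * (a ^ n) ^ k) = (1 + a ^ n) ^ k * C := by
      rw [← hcTa, mul_pow]; ring
    rw [h2] at h1
    exact h1.trans (main k)
  obtain ⟨k, hk⟩ := pow_unbounded_of_one_lt (Ψ (10 * r 0) / C)
    (by nlinarith : (1:ℝ) < 1 + a ^ n)
  have := hcomb k
  have : Ψ (10 * r 0) / C < Ψ (10 * r 0) / C := by
    calc Ψ (10 * r 0) / C < (1 + a ^ n) ^ k := hk
      _ ≤ Ψ (10 * r 0) / C := by
          rw [le_div_iff₀ hCpos]; exact hcomb k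
  exact lt_irrefl _ this
end
end
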